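/- arXiv:2601.00151 — 4 statements merged into one kernel-verified Lean document; each statement's English description precedes it below -/
import Mathlib

section
/- Let (S, U, S₁) be jointly distributed according to a probability measure π(ds,du,ds₁) on 𝕊 × 𝕌 × 𝕊 whose disintegration is π(ds)γ(du|s)η(ds₁|s,u), and whose two marginals on the first and third coordinates coincide (both equal π(ds)). Define the Bellman operator T^γ f(s) := ∫_𝕌 (c(s,u) + β ∫ f(s₁) η(ds₁|s,u)) γ(du|s) for f ∈ L²(π), where c is bounded measurable and 0 < β < 1, and let Π denote the L²(π)-orthogonal projection onto the span of finitely many basis functions in L²(π). Then Π ∘ T^γ is a β-contraction on L²(π) and admits a unique fixed point. -/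
/-!
Write `P := (γ ⊗ₖ η).snd` for the state transition kernel `s ↦ ∫ γ(du|s) η(·|s,u)`. The invariance
hypothesis says `P ∘ₘ π = π`, so by `‖·‖₁ ≤ ‖·‖ₚ` in each fibre `P s` and then integrating over
`π`, the Markov operator `f ↦ (s ↦ ∫ f dP s)` does not increase `Lᵖ(π)` norms. The cost terms
cancel in a difference of Bellman operators, `T f - T g = β • P (f - g)`, so `T` is `β`-Lipschitz.
The orthogonal projection is `1`-Lipschitz, so `Π ∘ T` is a `β`-contraction of the complete space
`L²(π)`, and Banach's fixed point theorem applies.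
-/

open MeasureTheory ProbabilityTheory ENNReal

section MarkovOperator

variable {α β : Type*} {mα : MeasurableSpace α} {mβ : MeasurableSpace β}
  {μ : Measure α} {P : Kernel α β}

theorem MeasureTheory.AEStronglyMeasurable.ae_of_comp {δ : Type*} [TopologicalSpace δ]
    {f : β → δ} (hf : AEStronglyMeasurable f (P ∘ₘ μ)) :
    ∀ᵐ a ∂μ, AEStronglyMeasurable f (P a) := by
  filter_upwards [Measure.ae_ae_of_ae_comp hf.ae_eq_mk] with a ha
  exact ⟨_, hf.stronglyMeasurable_mk, ha⟩

theorem eLpNorm_integral_kernel_le {E : Type*} [NormedAddCommGroup E] [NormedSpace ℝ E]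
    [IsMarkovKernel P] {p : ℝ≥0∞} (hp1 : 1 ≤ p) (hp : p ≠ ∞) {f : β → E}
    (hf : AEStronglyMeasurable f (P ∘ₘ μ)) :
    eLpNorm (fun a => ∫ y, f y ∂P a) p μ ≤ eLpNorm f p (P ∘ₘ μ) := by
  have hp0 : p ≠ 0 := (zero_lt_one.trans_le hp1).ne'
  have hfibre : ∀ᵐ a ∂μ, ‖∫ y, f y ∂P a‖ₑ ≤ ‖eLpNorm f p (P a)‖ₑ := by
    filter_upwards [hf.ae_of_comp] with a ha
    calc ‖∫ y, f y ∂P a‖ₑ ≤ eLpNorm f 1 (P a) := by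
          rw [eLpNorm_one_eq_lintegral_enorm]; exact enorm_integral_le_lintegral_enorm f
      _ ≤ eLpNorm f p (P a) := eLpNorm_le_eLpNorm_of_exponent_le hp1 ha
  refine (eLpNorm_mono_enorm_ae hfibre).trans_eq ?_
  have hp0' : p.toReal ≠ 0 := toReal_ne_zero.mpr ⟨hp0, hp⟩
  simp only [eLpNorm_eq_lintegral_rpow_enorm_toReal hp0 hp, enorm_eq_self, ← rpow_mul,
    one_div, inv_mul_cancel₀ hp0', rpow_one]
  rw [Measure.lintegral_bind P.aemeasurable (hf.enorm.pow_const _)]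

end MarkovOperator

section CompProd

variable {α β γ E : Type*} {mα : MeasurableSpace α} {mβ : MeasurableSpace β}
  {mγ : MeasurableSpace γ} [NormedAddCommGroup E] [NormedSpace ℝ E]
  {κ : Kernel α β} {η : Kernel (α × β) γ} [IsSFiniteKernel κ] [IsSFiniteKernel η]

theorem ProbabilityTheory.Kernel.snd_compProd_apply (a : α) :
    (κ ⊗ₖ η).snd a = (κ a).bind fun b => η (a, b) := by
  rw [Kernel.snd_apply, Kernel.compProd_apply_eq_compProd_sectR, ← Measure.snd,
    Measure.snd_compProd]
  rfl

theorem MeasureTheory.Integrable.integral_of_snd_compProd {a : α} {f : γ → E}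
    (hf : Integrable f ((κ ⊗ₖ η).snd a)) :
    Integrable (fun b => ∫ y, f y ∂η (a, b)) (κ a) := by
  rw [Kernel.snd_apply] at hf
  exact (hf.comp_measurable measurable_snd).integral_compProd

theorem ProbabilityTheory.Kernel.integral_snd_compProd {a : α} {f : γ → E}
    (hf : Integrable f ((κ ⊗ₖ η).snd a)) :
    ∫ y, f y ∂(κ ⊗ₖ η).snd a = ∫ b, ∫ y, f y ∂η (a, b) ∂κ a := by
  rw [Kernel.snd_apply] at hf ⊢
  rw [integral_map measurable_snd.aemeasurable hf.aestronglyMeasurable]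
  exact integral_compProd (hf.comp_measurable measurable_snd)

end CompProd

section Bellman

variable {S A : Type*} {mS : MeasurableSpace S} {mA : MeasurableSpace A}

noncomputable def bellmanOperator (γ : Kernel S A) (η : Kernel (S × A) S) (c : S × A → ℝ) (β : ℝ)
    (f : S → ℝ) (s : S) : ℝ :=
  ∫ u, (c (s, u) + β * ∫ s₁, f s₁ ∂(η (s, u))) ∂(γ s)

variable {γ : Kernel S A} {η : Kernel (S × A) S} {c : S × A → ℝ} {β : ℝ}

theorem bellmanOperator_sub_apply [IsSFiniteKernel γ] [IsSFiniteKernel η] {f g : S → ℝ} {s : S}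
    (hc : Integrable (fun u => c (s, u)) (γ s)) (hf : Integrable f ((γ ⊗ₖ η).snd s))
    (hg : Integrable g ((γ ⊗ₖ η).snd s)) :
    bellmanOperator γ η c β f s - bellmanOperator γ η c β g s =
      β * ∫ x, (f x - g x) ∂(γ ⊗ₖ η).snd s := by
  simp only [bellmanOperator]
  rw [integral_add hc (hf.integral_of_snd_compProd.const_mul β),
    integral_add hc (hg.integral_of_snd_compProd.const_mul β), integral_const_mul,
    integral_const_mul, ← Kernel.integral_snd_compProd hf, ← Kernel.integral_snd_compProd hg,
    integral_sub hf hg]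
  ring

theorem norm_sub_le_of_ae_eq_bellmanOperator [IsMarkovKernel γ] [IsMarkovKernel η]
    {p : ℝ≥0∞} [Fact (1 ≤ p)] (hp : p ≠ ∞) {π : Measure S} [IsFiniteMeasure π]
    (hP : (γ ⊗ₖ η).snd ∘ₘ π = π) (hc : ∀ s, Integrable (fun u => c (s, u)) (γ s)) (hβ : 0 ≤ β)
    {T : Lp ℝ p π → Lp ℝ p π} (hT : ∀ f, (T f : S → ℝ) =ᵐ[π] bellmanOperator γ η c β f)
    (f g : Lp ℝ p π) : ‖T f - T g‖ ≤ β * ‖f - g‖ := by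
  have hp1 : 1 ≤ p := Fact.out
  have hint : ∀ h : Lp ℝ p π, ∀ᵐ s ∂π, Integrable h ((γ ⊗ₖ η).snd s) := fun h =>
    Measure.ae_integrable_of_integrable_comp (by rw [hP]; exact (Lp.memLp h).integrable hp1)
  have hTsub : ⇑(T f - T g) =ᵐ[π] fun s => β * ∫ x, (f x - g x) ∂(γ ⊗ₖ η).snd s := by
    filter_upwards [Lp.coeFn_sub (T f) (T g), hT f, hT g, hint f, hint g]
      with s hsub hTf hTg hfs hgs
    rw [hsub, Pi.sub_apply, hTf, hTg, bellmanOperator_sub_apply (hc s) hfs hgs]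
  have hPsub := eLpNorm_integral_kernel_le (P := (γ ⊗ₖ η).snd) hp1 hp
    (f := ⇑f - ⇑g) (by rw [hP]; exact (Lp.aestronglyMeasurable f).sub (Lp.aestronglyMeasurable g))
  rw [hP] at hPsub
  rw [Lp.norm_def, Lp.norm_def, eLpNorm_congr_ae hTsub]
  calc (eLpNorm (β • fun s => ∫ x, (f - g : S → ℝ) x ∂(γ ⊗ₖ η).snd s) p π).toReal
      = β * (eLpNorm (fun s => ∫ x, (f - g : S → ℝ) x ∂(γ ⊗ₖ η).snd s) p π).toReal := by
        rw [eLpNorm_const_smul, toReal_mul, toReal_enorm, Real.norm_of_nonneg hβ]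
    _ ≤ β * (eLpNorm (f - g : Lp ℝ p π) p π).toReal := by
        rw [← eLpNorm_congr_ae (Lp.coeFn_sub f g)] at hPsub
        exact mul_le_mul_of_nonneg_left (toReal_mono (Lp.eLpNorm_ne_top _) hPsub) hβ

end Bellman

theorem stmt_4_general {𝕊 𝕌 : Type*} [MeasurableSpace 𝕊] [MeasurableSpace 𝕌]
    (π : Measure 𝕊) [IsProbabilityMeasure π]
    (γ : Kernel 𝕊 𝕌) [IsMarkovKernel γ]
    (η : Kernel (𝕊 × 𝕌) 𝕊) [IsMarkovKernel η]
    (c : 𝕊 × 𝕌 → ℝ) (hcmeas : Measurable c) (Cc : ℝ) (hcbd : ∀ x, |c x| ≤ Cc)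
    (β : ℝ) (hβ0 : 0 < β) (hβ1 : β < 1)
    -- the marginal of `π(ds) γ(du|s) η(ds₁|s,u)` on the third coordinate is again `π`:
    (hinv : (π.bind fun s => ((γ s).bind fun u => η (s, u))) = π)
    (K : Submodule ℝ (Lp ℝ 2 π))
    [K.HasOrthogonalProjection]
    -- `T` is (a representative in `L²(π)` of) the Bellman operator `T^γ`:
    (T : Lp ℝ 2 π → Lp ℝ 2 π)
    (hT : ∀ f : Lp ℝ 2 π, (T f : 𝕊 → ℝ) =ᵐ[π]
      fun s => ∫ u, (c (s, u) + β * ∫ s₁, f s₁ ∂(η (s, u))) ∂(γ s)) :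
    (∀ f g : Lp ℝ 2 π,
      ‖(K.orthogonalProjectionOnto (T f) : Lp ℝ 2 π) - (K.orthogonalProjectionOnto (T g) : Lp ℝ 2 π)‖
        ≤ β * ‖f - g‖) ∧
    ∃! f : Lp ℝ 2 π, (K.orthogonalProjectionOnto (T f) : Lp ℝ 2 π) = f := by
  have hP : (γ ⊗ₖ η).snd ∘ₘ π = π := by
    rw [← hinv]
    congr 1
    funext s
    exact Kernel.snd_compProd_apply s
  have hc (s : 𝕊) : Integrable (fun u => c (s, u)) (γ s) :=
    .of_bound (hcmeas.comp measurable_prodMk_left).aestronglyMeasurable Cc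
      (.of_forall fun u => hcbd (s, u))
  have hT_lip : LipschitzWith β.toNNReal T := .of_dist_le_mul fun f g => by
    simpa [dist_eq_norm, hβ0.le] using
      norm_sub_le_of_ae_eq_bellmanOperator ENNReal.ofNat_ne_top hP hc hβ0.le hT f g
  have hcontr : ContractingWith β.toNNReal (K.starProjection ∘ T) := by
    refine ⟨Real.toNNReal_lt_one.mpr hβ1, ?_⟩
    have hproj : LipschitzWith 1 K.starProjection :=
      K.starProjection.lipschitz.weaken (by exact_mod_cast K.starProjection_norm_le)
    simpa only [one_mul] using hproj.comp hT_lip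
  refine ⟨fun f g => ?_, ?_⟩
  · have h := hcontr.2.dist_le_mul f g
    rwa [dist_eq_norm, dist_eq_norm, Real.coe_toNNReal _ hβ0.le] at h
  · exact ⟨_, hcontr.fixedPoint_isFixedPt, fun _ hf => hcontr.fixedPoint_unique hf⟩

theorem stmt_4 {𝕊 𝕌 : Type*} [MeasurableSpace 𝕊] [MeasurableSpace 𝕌]
    (π : Measure 𝕊) [IsProbabilityMeasure π]
    (γ : Kernel 𝕊 𝕌) [IsMarkovKernel γ]
    (η : Kernel (𝕊 × 𝕌) 𝕊) [IsMarkovKernel η]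
    (c : 𝕊 × 𝕌 → ℝ) (hcmeas : Measurable c) (Cc : ℝ) (hcbd : ∀ x, |c x| ≤ Cc)
    (β : ℝ) (hβ0 : 0 < β) (hβ1 : β < 1)
    -- the marginal of `π(ds) γ(du|s) η(ds₁|s,u)` on the third coordinate is again `π`:
    (hinv : (π.bind fun s => ((γ s).bind fun u => η (s, u))) = π)
    {d : ℕ} (φ : Fin d → Lp ℝ 2 π)
    (K : Submodule ℝ (Lp ℝ 2 π)) (hK : K = Submodule.span ℝ (Set.range φ))
    [K.HasOrthogonalProjection]
    -- `T` is (a representative in `L²(π)` of) the Bellman operator `T^γ`: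
    (T : Lp ℝ 2 π → Lp ℝ 2 π)
    (hT : ∀ f : Lp ℝ 2 π, (T f : 𝕊 → ℝ) =ᵐ[π]
      fun s => ∫ u, (c (s, u) + β * ∫ s₁, f s₁ ∂(η (s, u))) ∂(γ s)) :
    (∀ f g : Lp ℝ 2 π,
      ‖(K.orthogonalProjectionOnto (T f) : Lp ℝ 2 π) - (K.orthogonalProjectionOnto (T g) : Lp ℝ 2 π)‖
        ≤ β * ‖f - g‖) ∧
    ∃! f : Lp ℝ 2 π, (K.orthogonalProjectionOnto (T f) : Lp ℝ 2 π) = f :=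
  stmt_4_general π γ η c hcmeas Cc hcbd β hβ0 hβ1 hinv K T hT
end

section
/- Under the setting of the projected Bellman contraction (Π T^γ is a β-contraction on L²(π) with fixed point θ*ᵀΦ), if J is the fixed point of T^γ (i.e., T^γ J = J), then ‖J − θ*ᵀΦ‖_{L²(π)} ≤ (1/(1−β)) ‖J − Π J‖_{L²(π)}. -/
open MeasureTheory Function

/- Since `Π J = Π (T J)` and `θ*ᵀΦ = Π (T (θ*ᵀΦ))`, nonexpansiveness of `Π` and the contraction
property of `T` put `Π J` within `β ‖J - θ*ᵀΦ‖` of `θ*ᵀΦ`; the triangle inequality through `Π J`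
then gives `(1 - β) ‖J - θ*ᵀΦ‖ ≤ ‖J - Π J‖`. Only the metric structure is involved. -/

theorem dist_le_of_isFixedPt_comp {X : Type*} [PseudoMetricSpace X] {P T : X → X} {β : ℝ}
    (hβ : β < 1) (hP : LipschitzWith 1 P) (hT : ∀ a b, dist (T a) (T b) ≤ β * dist a b)
    {x J : X} (hx : IsFixedPt (P ∘ T) x) (hJ : IsFixedPt T J) :
    dist J x ≤ (1 - β)⁻¹ * dist J (P J) := by
  have hPJ : dist (P J) x ≤ β * dist J x := calc
    dist (P J) x = dist (P (T J)) (P (T x)) := by rw [hJ.eq]; exact congrArg _ hx.eq.symm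
    _ ≤ dist (T J) (T x) := by simpa using hP.dist_le_mul (T J) (T x)
    _ ≤ β * dist J x := hT J x
  have hβ' : 0 < 1 - β := sub_pos.mpr hβ
  rw [inv_mul_eq_div, le_div_iff₀ hβ']
  linarith [dist_triangle J (P J) x]

theorem stmt_5_general {𝕊 : Type*} [MeasurableSpace 𝕊] (π : Measure 𝕊)
    (β : ℝ) (hβ1 : β < 1)
    -- the Bellman operator `T^γ`, a `β`-contraction in `L²(π)`:
    (T : Lp ℝ 2 π → Lp ℝ 2 π)
    (hT : ∀ f g : Lp ℝ 2 π, ‖T f - T g‖ ≤ β * ‖f - g‖)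
    {d : ℕ} (φ : Fin d → Lp ℝ 2 π)
    (K : Submodule ℝ (Lp ℝ 2 π))
    [K.HasOrthogonalProjection]
    -- `θ*ᵀΦ` is the fixed point of `Π T^γ`:
    (θstar : Fin d → ℝ)
    (hfix : (K.orthogonalProjectionOnto (T (∑ i, θstar i • φ i)) : Lp ℝ 2 π)
      = ∑ i, θstar i • φ i)
    -- `J` is the fixed point of `T^γ`:
    (J : Lp ℝ 2 π) (hJ : T J = J) :
    ‖J - ∑ i, θstar i • φ i‖ ≤ (1 - β)⁻¹ * ‖J - (K.orthogonalProjectionOnto J : Lp ℝ 2 π)‖ := by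
  have hT' : ∀ f g, dist (T f) (T g) ≤ β * dist f g := by simpa only [dist_eq_norm] using hT
  have h := dist_le_of_isFixedPt_comp hβ1 K.lipschitzWith_starProjection hT' hfix hJ
  rwa [dist_eq_norm, dist_eq_norm] at h

theorem stmt_5 {𝕊 : Type*} [MeasurableSpace 𝕊] (π : Measure 𝕊) [IsProbabilityMeasure π]
    (β : ℝ) (hβ0 : 0 < β) (hβ1 : β < 1)
    -- the Bellman operator `T^γ`, a `β`-contraction in `L²(π)`:
    (T : Lp ℝ 2 π → Lp ℝ 2 π)
    (hT : ∀ f g : Lp ℝ 2 π, ‖T f - T g‖ ≤ β * ‖f - g‖)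
    {d : ℕ} (φ : Fin d → Lp ℝ 2 π)
    (K : Submodule ℝ (Lp ℝ 2 π)) (hK : K = Submodule.span ℝ (Set.range φ))
    [K.HasOrthogonalProjection]
    -- `θ*ᵀΦ` is the fixed point of `Π T^γ`:
    (θstar : Fin d → ℝ)
    (hfix : (K.orthogonalProjectionOnto (T (∑ i, θstar i • φ i)) : Lp ℝ 2 π)
      = ∑ i, θstar i • φ i)
    -- `J` is the fixed point of `T^γ`:
    (J : Lp ℝ 2 π) (hJ : T J = J) :
    ‖J - ∑ i, θstar i • φ i‖ ≤ (1 - β)⁻¹ * ‖J - (K.orthogonalProjectionOnto J : Lp ℝ 2 π)‖ :=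
  stmt_5_general π β hβ1 T hT φ K θstar hfix J hJ
end

section
/- Let Φ = (φ¹,…,φ^d) be basis functions with ‖φⁱ‖_∞ ≤ 1, let π be a probability measure, and suppose there exist θ̂ ∈ ℝ^d and λ < ∞ with ‖J − θ̂ᵀΦ‖_∞ ≤ λ, where J is the fixed point of the Bellman operator T^γ (a β-contraction in L²(π)). Let θ* be the fixed point parameter of Π T^γ (Π the L²(π)-orthogonal projection onto span Φ), and let σ_min > 0 be the minimum eigenvalue of E_π[Φ(S)Φᵀ(S)]. Then ‖J − θ*ᵀΦ‖_∞ ≤ λ (1 + ((2−β)/(1−β)) √(d/σ_min)). -/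
/-!
Write `u = θ̂ - θ*`, so that `uᵀΦ = (J - θ*ᵀΦ) - (J - θ̂ᵀΦ)`. By Minkowski and the `L²` error
bound, `‖uᵀΦ‖₂ ≤ (1/(1-β) + 1) λ`. Since `|φⁱ| ≤ 1`, the sup norm of `uᵀΦ` is at most
`‖u‖₁ ≤ √d ‖u‖₂ ≤ √(d/σ_min) ‖uᵀΦ‖₂`, the last step by the eigenvalue bound on the Gram matrix.
The triangle inequality `|J - θ*ᵀΦ| ≤ |J - θ̂ᵀΦ| + |uᵀΦ|` concludes.
-/

open MeasureTheory

section L2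

variable {α : Type*} [MeasurableSpace α] {μ : Measure α} {f g : α → ℝ}

lemma MeasureTheory.MemLp.sqrt_integral_sq_eq_norm_toLp (hf : MemLp f 2 μ) :
    √(∫ a, f a ^ 2 ∂μ) = ‖hf.toLp f‖ := by
  rw [norm_eq_sqrt_real_inner, L2.inner_def]
  congr 1
  refine integral_congr_ae ?_
  filter_upwards [hf.coeFn_toLp] with a ha
  simp [ha, sq]

lemma sqrt_integral_sq_sub_le (hf : MemLp f 2 μ) (hg : MemLp g 2 μ) :
    √(∫ a, (f a - g a) ^ 2 ∂μ) ≤ √(∫ a, f a ^ 2 ∂μ) + √(∫ a, g a ^ 2 ∂μ) := by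
  have hfg := (hf.sub hg).sqrt_integral_sq_eq_norm_toLp
  simp only [Pi.sub_apply] at hfg
  rw [hfg, hf.sqrt_integral_sq_eq_norm_toLp,
    hg.sqrt_integral_sq_eq_norm_toLp, MemLp.toLp_sub hf hg]
  exact norm_sub_le _ _

lemma sqrt_integral_sq_le_of_ae_abs_le [IsProbabilityMeasure μ] {c : ℝ}
    (h : ∀ᵐ a ∂μ, |f a| ≤ c) : √(∫ a, f a ^ 2 ∂μ) ≤ c := by
  obtain ⟨a, ha⟩ := h.exists
  have hc : 0 ≤ c := (abs_nonneg _).trans ha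
  refine Real.sqrt_le_iff.2 ⟨hc, ?_⟩
  calc ∫ a, f a ^ 2 ∂μ ≤ ∫ _, c ^ 2 ∂μ :=
        integral_mono_of_nonneg (ae_of_all _ fun a => sq_nonneg _) (integrable_const _)
          (h.mono fun a ha => sq_le_sq' (abs_le.1 ha).1 (abs_le.1 ha).2)
    _ = c ^ 2 := by simp

end L2

lemma Finset.sum_abs_le_sqrt_card_mul_sqrt_sum_sq {ι : Type*} (s : Finset ι) (v : ι → ℝ) :
    ∑ i ∈ s, |v i| ≤ √(s.card) * √(∑ i ∈ s, v i ^ 2) := by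
  rw [← Real.sqrt_mul (Nat.cast_nonneg _)]
  refine Real.le_sqrt_of_sq_le ?_
  simpa only [sq_abs] using sq_sum_le_card_mul_sum_sq (s := s) (f := fun i => |v i|)

section Basis

variable {α ι : Type*} [Fintype ι] {φ : ι → α → ℝ}

lemma abs_sum_mul_le_sum_abs (hφ : ∀ i a, |φ i a| ≤ 1) (v : ι → ℝ) (a : α) :
    |∑ i, v i * φ i a| ≤ ∑ i, |v i| :=
  (Finset.abs_sum_le_sum_abs _ _).trans <| Finset.sum_le_sum fun i _ => by
    rw [abs_mul]
    exact mul_le_of_le_one_right (abs_nonneg _) (hφ i a)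

lemma abs_sum_mul_le_of_gram_ge [MeasurableSpace α] {μ : Measure α}
    (hφ : ∀ i a, |φ i a| ≤ 1) {σ : ℝ} (hσ : 0 < σ) (v : ι → ℝ)
    (hgram : σ * ∑ i, v i ^ 2 ≤ ∫ a, (∑ i, v i * φ i a) ^ 2 ∂μ) (a : α) :
    |∑ i, v i * φ i a| ≤ √(Fintype.card ι / σ) * √(∫ a, (∑ i, v i * φ i a) ^ 2 ∂μ) := by
  have hsum : √(∑ i, v i ^ 2) ≤ √(∫ a, (∑ i, v i * φ i a) ^ 2 ∂μ) / √σ := by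
    rw [le_div_iff₀ (Real.sqrt_pos.2 hσ), ← Real.sqrt_mul' _ hσ.le, mul_comm]
    exact Real.sqrt_le_sqrt hgram
  calc |∑ i, v i * φ i a| ≤ ∑ i, |v i| := abs_sum_mul_le_sum_abs hφ v a
    _ ≤ √(Fintype.card ι) * √(∑ i, v i ^ 2) :=
        Finset.univ.sum_abs_le_sqrt_card_mul_sqrt_sum_sq v
    _ ≤ √(Fintype.card ι) * (√(∫ a, (∑ i, v i * φ i a) ^ 2 ∂μ) / √σ) := by gcongr
    _ = _ := by rw [Real.sqrt_div' _ hσ.le]; ring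

end Basis

theorem stmt_6_general {𝕊 : Type*} [MeasurableSpace 𝕊] (π : Measure 𝕊) [IsProbabilityMeasure π]
    (β : ℝ) (hβ1 : β < 1)
    {d : ℕ} (φ : Fin d → 𝕊 → ℝ) (hφmeas : ∀ i, Measurable (φ i))
    (hφbd : ∀ i s, |φ i s| ≤ 1)
    (J : 𝕊 → ℝ) (hJL2 : MemLp J 2 π)
    (θhat θstar : Fin d → ℝ) (lam : ℝ)
    -- `J` is within `λ` (sup-norm) of the span of the basis functions:
    (hlam : ∀ s, |J s - ∑ i, θhat i * φ i s| ≤ lam)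
    -- minimum eigenvalue of the Gram matrix `E_π[Φ Φᵀ]`:
    (σmin : ℝ) (hσ : 0 < σmin)
    (hgram : ∀ v : Fin d → ℝ,
      σmin * ∑ i, v i ^ 2 ≤ ∫ s, (∑ i, v i * φ i s) ^ 2 ∂π)
    -- the `L²` error bound for the fixed point `θ*ᵀΦ` of `Π T^γ`
    -- (here `θ̂ᵀΦ` bounds the projection error since `Π J` is the best approximation):
    (hL2 : Real.sqrt (∫ s, (J s - ∑ i, θstar i * φ i s) ^ 2 ∂π)
      ≤ (1 - β)⁻¹ * Real.sqrt (∫ s, (J s - ∑ i, θhat i * φ i s) ^ 2 ∂π)) :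
    ∀ s, |J s - ∑ i, θstar i * φ i s|
      ≤ lam * (1 + (2 - β) / (1 - β) * Real.sqrt (d / σmin)) := by
  have hmemLp (θ : Fin d → ℝ) : MemLp (fun s => ∑ i, θ i * φ i s) 2 π :=
    memLp_finsetSum _ fun i _ =>
      (MemLp.of_bound (hφmeas i).aestronglyMeasurable 1
        (ae_of_all _ fun s => (Real.norm_eq_abs _).trans_le (hφbd i s))).const_mul (θ i)
  have hβ : 0 < 1 - β := by linarith
  set u := θhat - θstar
  have hu (s : 𝕊) : ∑ i, u i * φ i s
      = (J s - ∑ i, θstar i * φ i s) - (J s - ∑ i, θhat i * φ i s) := by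
    simp only [u, Pi.sub_apply, sub_mul, Finset.sum_sub_distrib]
    ring
  have hhat : √(∫ s, (J s - ∑ i, θhat i * φ i s) ^ 2 ∂π) ≤ lam :=
    sqrt_integral_sq_le_of_ae_abs_le (ae_of_all _ hlam)
  have hL2u : √(∫ s, (∑ i, u i * φ i s) ^ 2 ∂π) ≤ (2 - β) / (1 - β) * lam := by
    simp only [hu]
    calc _ ≤ _ := sqrt_integral_sq_sub_le (hJL2.sub (hmemLp θstar)) (hJL2.sub (hmemLp θhat))
      _ ≤ (1 - β)⁻¹ * lam + lam := add_le_add (hL2.trans (by gcongr)) hhat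
      _ = (2 - β) / (1 - β) * lam := by field_simp; ring
  intro s
  calc |J s - ∑ i, θstar i * φ i s|
      ≤ |J s - ∑ i, θhat i * φ i s| + |∑ i, u i * φ i s| := by
        rw [hu]; exact sub_le_iff_le_add'.1 (abs_sub_abs_le_abs_sub _ _)
    _ ≤ lam + √(d / σmin) * ((2 - β) / (1 - β) * lam) := by
        gcongr
        · exact hlam s
        · have hsup := abs_sum_mul_le_of_gram_ge hφbd hσ u (hgram u) s
          rw [Fintype.card_fin] at hsup
          exact hsup.trans (by gcongr)
    _ = lam * (1 + (2 - β) / (1 - β) * Real.sqrt (d / σmin)) := by ring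

theorem stmt_6 {𝕊 : Type*} [MeasurableSpace 𝕊] (π : Measure 𝕊) [IsProbabilityMeasure π]
    (β : ℝ) (hβ0 : 0 < β) (hβ1 : β < 1)
    {d : ℕ} (φ : Fin d → 𝕊 → ℝ) (hφmeas : ∀ i, Measurable (φ i))
    (hφbd : ∀ i s, |φ i s| ≤ 1)
    (J : 𝕊 → ℝ) (hJmeas : Measurable J) (hJL2 : MemLp J 2 π)
    (θhat θstar : Fin d → ℝ) (lam : ℝ)
    -- `J` is within `λ` (sup-norm) of the span of the basis functions:
    (hlam : ∀ s, |J s - ∑ i, θhat i * φ i s| ≤ lam)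
    -- minimum eigenvalue of the Gram matrix `E_π[Φ Φᵀ]`:
    (σmin : ℝ) (hσ : 0 < σmin)
    (hgram : ∀ v : Fin d → ℝ,
      σmin * ∑ i, v i ^ 2 ≤ ∫ s, (∑ i, v i * φ i s) ^ 2 ∂π)
    -- the `L²` error bound for the fixed point `θ*ᵀΦ` of `Π T^γ`
    -- (here `θ̂ᵀΦ` bounds the projection error since `Π J` is the best approximation):
    (hL2 : Real.sqrt (∫ s, (J s - ∑ i, θstar i * φ i s) ^ 2 ∂π)
      ≤ (1 - β)⁻¹ * Real.sqrt (∫ s, (J s - ∑ i, θhat i * φ i s) ^ 2 ∂π)) :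
    ∀ s, |J s - ∑ i, θstar i * φ i s|
      ≤ lam * (1 + (2 - β) / (1 - β) * Real.sqrt (d / σmin)) :=
  stmt_6_general π β hβ1 φ hφmeas hφbd J hJL2 θhat θstar lam hlam σmin hσ hgram hL2
end

section
/- In the setting where Π T^γ is a β-contraction in L²(π) with unique fixed point θ*ᵀΦ, for any θ ≠ θ* in ℝ^d (with Φ having linearly independent coordinates in L²(π)), (θ − θ*)ᵀ E_π[ Φ(S)( C + β θᵀΦ(S₁) − θᵀΦ(S) ) ] ≤ (β − 1) ‖(θ − θ*)ᵀΦ(S)‖²_{L²(π)} < 0. -/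
/-! The expected TD update is affine in `θ` and orthogonal to the features at `θ*`, so with
`f = (θ - θ*)ᵀΦ(S)` and `g = (θ - θ*)ᵀΦ(S₁)` its pairing with `θ - θ*` is `β E[f g] - E[f²]`.
Stationarity gives `E[g²] = E[f²]`, so AM–GM already yields `E[f g] ≤ E[f²]`, and linear
independence of the features makes `E[f²]` positive. -/

open MeasureTheory ProbabilityTheory

namespace MeasureTheory

variable {Ω ι : Type*} [MeasurableSpace Ω] {P : Measure Ω}

theorem memLp_sum_const_mul {p : ENNReal} (s : Finset ι) {F : ι → Ω → ℝ}
    (hF : ∀ i ∈ s, MemLp (F i) p P) (w : ι → ℝ) :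
    MemLp (fun ω => ∑ i ∈ s, w i * F i ω) p P :=
  memLp_finsetSum s fun i hi => (hF i hi).const_mul (w i)

theorem sum_mul_integral_mul_eq_integral_sum_mul (s : Finset ι) {F : ι → Ω → ℝ}
    {G : Ω → ℝ}
    (hFG : ∀ i ∈ s, Integrable (fun ω => F i ω * G ω) P) (w : ι → ℝ) :
    ∑ i ∈ s, w i * ∫ ω, F i ω * G ω ∂P = ∫ ω, (∑ i ∈ s, w i * F i ω) * G ω ∂P := by
  simp_rw [Finset.sum_mul, mul_assoc]
  rw [integral_finsetSum s fun i hi => (hFG i hi).const_mul (w i)]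
  simp_rw [integral_const_mul]

theorem MemLp.integrable_fun_mul {p q : ENNReal} [ENNReal.HolderTriple p q 1] {f g : Ω → ℝ}
    (hf : MemLp f p P) (hg : MemLp g q P) : Integrable (fun ω => f ω * g ω) P :=
  hf.integrable_mul hg

theorem integral_mul_le_half_integral_sq_add {f g : Ω → ℝ} (hf : MemLp f 2 P)
    (hg : MemLp g 2 P) :
    ∫ ω, f ω * g ω ∂P ≤ (∫ ω, f ω ^ 2 ∂P + ∫ ω, g ω ^ 2 ∂P) / 2 := by
  rw [← integral_add hf.integrable_sq hg.integrable_sq, ← integral_div]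
  refine integral_mono (hf.integrable_fun_mul hg)
    ((hf.integrable_sq.add hg.integrable_sq).div_const 2) fun ω => ?_
  nlinarith [sq_nonneg (f ω - g ω)]

end MeasureTheory

section TemporalDifference

variable {Ω ι : Type*} [MeasurableSpace Ω] {P : Measure Ω}

theorem sum_sub_mul_integral_mul_tdError [Fintype ι] {X Y : ι → Ω → ℝ} {C : Ω → ℝ}
    {β : ℝ}
    (hX : ∀ i, MemLp (X i) 2 P) (hY : ∀ i, MemLp (Y i) 2 P) (hC : MemLp C 2 P)
    {θ θ' : ι → ℝ}
    (hθ' : ∀ i, ∫ ω, X i ω * (C ω + β * (∑ j, θ' j * Y j ω) - ∑ j, θ' j * X j ω) ∂P = 0) :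
    ∑ i, (θ i - θ' i) * ∫ ω, X i ω * (C ω + β * (∑ j, θ j * Y j ω) - ∑ j, θ j * X j ω) ∂P
      = β * ∫ ω, (∑ i, (θ i - θ' i) * X i ω) * (∑ i, (θ i - θ' i) * Y i ω) ∂P
        - ∫ ω, (∑ i, (θ i - θ' i) * X i ω) ^ 2 ∂P := by
  set f := fun ω => ∑ i, (θ i - θ' i) * X i ω
  set g := fun ω => ∑ i, (θ i - θ' i) * Y i ω
  have hf : MemLp f 2 P := memLp_sum_const_mul _ (fun i _ => hX i) _
  have hg : MemLp g 2 P := memLp_sum_const_mul _ (fun i _ => hY i) _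
  have hδ (w : ι → ℝ) :
      MemLp (fun ω => C ω + β * (∑ j, w j * Y j ω) - ∑ j, w j * X j ω) 2 P :=
    (hC.add ((memLp_sum_const_mul _ (fun j _ => hY j) w).const_mul β)).sub
      (memLp_sum_const_mul _ (fun j _ => hX j) w)
  have hcorr (i : ι) :
      ∫ ω, X i ω * (C ω + β * (∑ j, θ j * Y j ω) - ∑ j, θ j * X j ω) ∂P
        = ∫ ω, X i ω * (β * g ω - f ω) ∂P := by
    rw [← sub_zero (integral _ _), ← hθ' i,
      ← integral_sub ((hX i).integrable_fun_mul (hδ θ)) ((hX i).integrable_fun_mul (hδ θ'))]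
    congr 1
    funext ω
    simp only [f, g, sub_mul, Finset.sum_sub_distrib]
    ring
  simp_rw [hcorr]
  rw [sum_mul_integral_mul_eq_integral_sum_mul (G := fun ω => β * g ω - f ω) _
    (fun i _ => (hX i).integrable_fun_mul ((hg.const_mul β).sub hf))]
  rw [← integral_const_mul,
    ← integral_sub ((hf.integrable_fun_mul hg).const_mul β) hf.integrable_sq]
  congr 1
  funext ω
  ring

end TemporalDifference

theorem stmt_17_general {Ω 𝕊 : Type*} [MeasurableSpace Ω] [MeasurableSpace 𝕊]
    (P : Measure Ω)
    -- `(S, C, S₁)` jointly distributed with equal marginals on `S` and `S₁`: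
    (S S₁ : Ω → 𝕊) (C : Ω → ℝ)
    (hS : Measurable S) (hS₁ : Measurable S₁)
    (hstat : P.map S = P.map S₁)
    (β : ℝ) (hβ0 : 0 < β) (hβ1 : β < 1)
    {d : ℕ} (φ : Fin d → 𝕊 → ℝ) (hφ : ∀ i, Measurable (φ i))
    (hφS : ∀ i, MemLp (fun ω => φ i (S ω)) 2 P)
    (hφS₁ : ∀ i, MemLp (fun ω => φ i (S₁ ω)) 2 P)
    (hCL2 : MemLp C 2 P)
    -- linear independence of the basis functions in `L²(π)`:
    (hindep : ∀ v : Fin d → ℝ, v ≠ 0 → 0 < ∫ ω, (∑ i, v i * φ i (S ω)) ^ 2 ∂P)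
    -- `θ*ᵀΦ` is the fixed point of `Π T^γ`, expressed via the first-order
    -- (orthogonality) condition of the projection:
    (θstar : Fin d → ℝ)
    (hfix : ∀ i, ∫ ω, φ i (S ω) *
      (C ω + β * (∑ j, θstar j * φ j (S₁ ω)) - ∑ j, θstar j * φ j (S ω)) ∂P = 0)
    (θ : Fin d → ℝ) (hθ : θ ≠ θstar) :
    (∑ i, (θ i - θstar i) * ∫ ω, φ i (S ω) *
        (C ω + β * (∑ j, θ j * φ j (S₁ ω)) - ∑ j, θ j * φ j (S ω)) ∂P)
      ≤ (β - 1) * ∫ ω, (∑ i, (θ i - θstar i) * φ i (S ω)) ^ 2 ∂P ∧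
    (β - 1) * ∫ ω, (∑ i, (θ i - θstar i) * φ i (S ω)) ^ 2 ∂P < 0 := by
  have hsq : ∫ ω, (∑ i, (θ i - θstar i) * φ i (S₁ ω)) ^ 2 ∂P
      = ∫ ω, (∑ i, (θ i - θstar i) * φ i (S ω)) ^ 2 ∂P :=
    ((IdentDistrib.mk hS.aemeasurable hS₁.aemeasurable hstat).comp
      ((Finset.measurable_sum _ fun i _ => (hφ i).const_mul _).pow_const 2)).integral_eq.symm
  have hcs := integral_mul_le_half_integral_sq_add
    (memLp_sum_const_mul Finset.univ (fun i _ => hφS i) fun i => θ i - θstar i)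
    (memLp_sum_const_mul Finset.univ (fun i _ => hφS₁ i) fun i => θ i - θstar i)
  rw [hsq, add_self_div_two] at hcs
  have hpos : 0 < ∫ ω, (∑ i, (θ i - θstar i) * φ i (S ω)) ^ 2 ∂P :=
    hindep (θ - θstar) (sub_ne_zero.mpr hθ)
  rw [sum_sub_mul_integral_mul_tdError hφS hφS₁ hCL2 hfix]
  exact ⟨by linarith [mul_le_mul_of_nonneg_left hcs hβ0.le],
    mul_neg_of_neg_of_pos (by linarith) hpos⟩

theorem stmt_17 {Ω 𝕊 : Type*} [MeasurableSpace Ω] [MeasurableSpace 𝕊]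
    (P : Measure Ω) [IsProbabilityMeasure P]
    -- `(S, C, S₁)` jointly distributed with equal marginals on `S` and `S₁`:
    (S S₁ : Ω → 𝕊) (C : Ω → ℝ)
    (hS : Measurable S) (hS₁ : Measurable S₁) (hC : Measurable C)
    (hstat : P.map S = P.map S₁)
    (β : ℝ) (hβ0 : 0 < β) (hβ1 : β < 1)
    {d : ℕ} (φ : Fin d → 𝕊 → ℝ) (hφ : ∀ i, Measurable (φ i))
    (hφS : ∀ i, MemLp (fun ω => φ i (S ω)) 2 P)
    (hφS₁ : ∀ i, MemLp (fun ω => φ i (S₁ ω)) 2 P)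
    (hCL2 : MemLp C 2 P)
    -- linear independence of the basis functions in `L²(π)`:
    (hindep : ∀ v : Fin d → ℝ, v ≠ 0 → 0 < ∫ ω, (∑ i, v i * φ i (S ω)) ^ 2 ∂P)
    -- `θ*ᵀΦ` is the fixed point of `Π T^γ`, expressed via the first-order
    -- (orthogonality) condition of the projection:
    (θstar : Fin d → ℝ)
    (hfix : ∀ i, ∫ ω, φ i (S ω) *
      (C ω + β * (∑ j, θstar j * φ j (S₁ ω)) - ∑ j, θstar j * φ j (S ω)) ∂P = 0)
    (θ : Fin d → ℝ) (hθ : θ ≠ θstar) :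
    (∑ i, (θ i - θstar i) * ∫ ω, φ i (S ω) *
        (C ω + β * (∑ j, θ j * φ j (S₁ ω)) - ∑ j, θ j * φ j (S ω)) ∂P)
      ≤ (β - 1) * ∫ ω, (∑ i, (θ i - θstar i) * φ i (S ω)) ^ 2 ∂P ∧
    (β - 1) * ∫ ω, (∑ i, (θ i - θstar i) * φ i (S ω)) ^ 2 ∂P < 0 :=
  stmt_17_general P S S₁ C hS hS₁ hstat β hβ0 hβ1 φ hφ hφS hφS₁ hCL2 hindep θstar hfix θ hθ
end
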